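/- Under the assumptions below, the series Σ_{k=1}^∞ (1/k) · sin(πk/N) · ∫₀^{λₙ} (−f(t))^{k/N} dt/t converges absolutely, and its sum is strictly positive. -/

import Mathlib

open scoped BigOperators
open MeasureTheory Real Set

/-!
Write `f t = t g(t)`; `g(0) = -c < 0` and `f` has no root in `(0, λₙ)`, so `0 < -f < 1` there
and `-f t ≤ C t`. With `x(t) = (-f t)^(1/N) ∈ (0, 1)` and `θ = π/N`, the `k`-th term of the
series is `∫ sin(kθ) x^k / k dt/t`, and summing the imaginary part of the Taylor series of
`-log (1 - z)` at `z = x e^{iθ}` turns the series into `∫₀^{λₙ} -arg (1 - x e^{iθ}) dt/t`.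
The interchange is dominated convergence with majorants `q^k x(t)/t`, `q = (max (-f))^(1/N) < 1`,
and `x(t)/t ≤ C' t^(1/N - 1)` is integrable at `0`. Since `0 < θ < π`, the point `1 - x e^{iθ}`
lies in the lower half plane, so the integrand is positive.
-/

namespace Complex

theorem hasSum_sin_mul_pow {x : ℝ} (hx : |x| < 1) (θ : ℝ) :
    HasSum (fun k : ℕ => 1 / ((k : ℝ) + 1) * Real.sin (((k : ℝ) + 1) * θ) * x ^ (k + 1))
      (-arg (1 - x * exp (θ * I))) := by
  have hz : ‖(x : ℂ) * exp (θ * I)‖ < 1 := by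
    rwa [norm_mul, norm_exp_ofReal_mul_I, mul_one, norm_real, Real.norm_eq_abs]
  convert hasSum_im (hasSum_taylorSeries_neg_log' hz) using 1
  · funext k
    have : ((x : ℂ) * exp (θ * I)) ^ (k + 1) / ((k : ℂ) + 1) =
        ((x ^ (k + 1) / ((k : ℝ) + 1) : ℝ) : ℂ) * exp ((((k : ℝ) + 1) * θ : ℝ) * I) := by
      rw [mul_pow, ← exp_nat_mul]
      push_cast
      ring_nf
    rw [this, im_ofReal_mul, exp_ofReal_mul_I_im]
    ring
  · rw [neg_im, log_im]

theorem neg_arg_one_sub_pos {x θ : ℝ} (hx : 0 < x) (hθ₀ : 0 < θ) (hθ : θ < π) :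
    0 < -arg (1 - x * exp (θ * I)) := by
  rw [neg_pos, arg_neg_iff, sub_im, one_im, im_ofReal_mul, exp_ofReal_mul_I_im, zero_sub,
    neg_neg_iff_pos]
  exact mul_pos hx (Real.sin_pos_of_pos_of_lt_pi hθ₀ hθ)

end Complex

theorem abs_one_div_mul_sin_mul_pow_div_le {x q t : ℝ} (hx : 0 ≤ x) (hxq : x ≤ q)
    (ht : 0 ≤ t) (k : ℕ) (θ : ℝ) :
    |1 / ((k : ℝ) + 1) * Real.sin (((k : ℝ) + 1) * θ) * x ^ (k + 1) / t| ≤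
      q ^ k * (x / t) := by
  have hc : |1 / ((k : ℝ) + 1) * Real.sin (((k : ℝ) + 1) * θ)| ≤ 1 := by
    rw [abs_mul, abs_of_pos (by positivity : (0 : ℝ) < 1 / ((k : ℝ) + 1))]
    have hk : 1 ≤ (k : ℝ) + 1 := by linarith [k.cast_nonneg (α := ℝ)]
    exact mul_le_one₀ (div_le_one_of_le₀ hk (by positivity)) (abs_nonneg _) (abs_sin_le_one _)
  calc |1 / ((k : ℝ) + 1) * Real.sin (((k : ℝ) + 1) * θ) * x ^ (k + 1) / t|
      = |1 / ((k : ℝ) + 1) * Real.sin (((k : ℝ) + 1) * θ)| * (x ^ k * (x / t)) := by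
        rw [abs_div, abs_mul, abs_of_nonneg ht, abs_of_nonneg (pow_nonneg hx _), pow_succ]
        ring
    _ ≤ 1 * (q ^ k * (x / t)) := by gcongr
    _ = q ^ k * (x / t) := one_mul _

section SeriesOfIntegrals

variable {w : ℝ → ℝ} {a q : ℝ}

theorem hasSum_integral_sin_mul_pow_div (hw : Measurable w) (hw0 : ∀ t ∈ Ioo 0 a, 0 ≤ w t)
    (hwq : ∀ t ∈ Ioo 0 a, w t ≤ q) (hq0 : 0 ≤ q) (hq : q < 1)
    (hint : IntegrableOn (fun t => w t / t) (Ioo 0 a)) (θ : ℝ) :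
    HasSum (fun k : ℕ => 1 / ((k : ℝ) + 1) * Real.sin (((k : ℝ) + 1) * θ) *
        ∫ t in Ioo 0 a, w t ^ (k + 1) / t)
      (∫ t in Ioo 0 a, -Complex.arg (1 - w t * Complex.exp (θ * Complex.I)) / t) := by
  simp_rw [← integral_const_mul, ← mul_div_assoc]
  refine hasSum_integral_of_dominated_convergence (fun k t => q ^ k * (w t / t))
    (fun k => ((measurable_const.mul (hw.pow_const _)).div measurable_id).aestronglyMeasurable)
    (fun k => ae_restrict_of_forall_mem measurableSet_Ioo fun t ht =>
      abs_one_div_mul_sin_mul_pow_div_le (hw0 t ht) (hwq t ht) ht.1.le k θ)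
    (ae_of_all _ fun t => (summable_geometric_of_lt_one hq0 hq).mul_right _) ?_
    (ae_restrict_of_forall_mem measurableSet_Ioo fun t ht => ?_)
  · simp_rw [tsum_mul_right, tsum_geometric_of_lt_one hq0 hq]
    exact hint.const_mul _
  · have hwt : |w t| < 1 := by rw [abs_of_nonneg (hw0 t ht)]; exact (hwq t ht).trans_lt hq
    exact (Complex.hasSum_sin_mul_pow hwt θ).div_const t

theorem integrableOn_neg_arg_div (hw : Measurable w) (hw0 : ∀ t ∈ Ioo 0 a, 0 ≤ w t)
    (hwq : ∀ t ∈ Ioo 0 a, w t ≤ q) (hq0 : 0 ≤ q) (hq : q < 1)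
    (hint : IntegrableOn (fun t => w t / t) (Ioo 0 a)) (θ : ℝ) :
    IntegrableOn (fun t => -Complex.arg (1 - w t * Complex.exp (θ * Complex.I)) / t)
      (Ioo 0 a) := by
  refine (hint.const_mul (1 - q)⁻¹).mono' ?_
    (ae_restrict_of_forall_mem measurableSet_Ioo fun t ht => ?_)
  · exact ((Complex.measurable_arg.comp (measurable_const.sub
      ((Complex.measurable_ofReal.comp hw).mul_const _))).neg.div
        measurable_id).aestronglyMeasurable
  · have hwt : |w t| < 1 := by rw [abs_of_nonneg (hw0 t ht)]; exact (hwq t ht).trans_lt hq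
    exact ((Complex.hasSum_sin_mul_pow hwt θ).div_const t).norm_le_of_bounded
      ((hasSum_geometric_of_lt_one hq0 hq).mul_right (w t / t))
      fun k => abs_one_div_mul_sin_mul_pow_div_le (hw0 t ht) (hwq t ht) ht.1.le k θ

theorem integral_neg_arg_div_pos (hw : Measurable w) (hw0 : ∀ t ∈ Ioo 0 a, 0 < w t)
    (hwq : ∀ t ∈ Ioo 0 a, w t ≤ q) (hq0 : 0 ≤ q) (hq : q < 1)
    (hint : IntegrableOn (fun t => w t / t) (Ioo 0 a)) (ha : 0 < a) {θ : ℝ} (hθ₀ : 0 < θ)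
    (hθ : θ < π) :
    0 < ∫ t in Ioo 0 a, -Complex.arg (1 - w t * Complex.exp (θ * Complex.I)) / t := by
  rw [← integral_Ioc_eq_integral_Ioo, ← intervalIntegral.integral_of_le ha.le]
  refine intervalIntegral.intervalIntegral_pos_of_pos_on ?_ (fun t ht =>
    div_pos (Complex.neg_arg_one_sub_pos (hw0 t ht) hθ₀ hθ) ht.1) ha
  exact (intervalIntegrable_iff_integrableOn_Ioo_of_le ha.le).2
    (integrableOn_neg_arg_div hw (fun t ht => (hw0 t ht).le) hwq hq0 hq hint θ)

end SeriesOfIntegrals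

section RpowSeries

variable {u : ℝ → ℝ} {a C : ℝ}

theorem integrableOn_rpow_div_of_le_mul (hu : Measurable u) (ha : 0 < a)
    (hu0 : ∀ t ∈ Ioo 0 a, 0 ≤ u t) (huC : ∀ t ∈ Ioo 0 a, u t ≤ C * t) {ρ : ℝ}
    (hρ : 0 < ρ) :
    IntegrableOn (fun t => u t ^ ρ / t) (Ioo 0 a) := by
  have hdom : IntegrableOn (fun t => C ^ ρ * t ^ (ρ - 1)) (Ioo 0 a) :=
    ((intervalIntegral.integrableOn_Ioo_rpow_iff ha).2 (by linarith)).const_mul _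
  refine hdom.mono' ((hu.pow_const ρ).div measurable_id).aestronglyMeasurable
    (ae_restrict_of_forall_mem measurableSet_Ioo fun t ht => ?_)
  have hC : 0 ≤ C := nonneg_of_mul_nonneg_left ((hu0 t ht).trans (huC t ht)) ht.1
  rw [Real.norm_eq_abs, abs_of_nonneg (div_nonneg (rpow_nonneg (hu0 t ht) ρ) ht.1.le),
    rpow_sub_one ht.1.ne', mul_div_assoc', ← mul_rpow hC ht.1.le]
  exact div_le_div_of_nonneg_right (rpow_le_rpow (hu0 t ht) (huC t ht) hρ.le) ht.1.le

theorem exists_pos_hasSum_sin_mul_integral_rpow {N : ℕ} (hN : 2 ≤ N) (hu : Continuous u)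
    (ha : 0 < a) (hu0 : ∀ t ∈ Ioo 0 a, 0 < u t) (hu1 : ∀ t ∈ Icc 0 a, u t < 1)
    (huC : ∀ t ∈ Ioo 0 a, u t ≤ C * t) :
    ∃ S, 0 < S ∧ HasSum (fun k : ℕ => 1 / ((k : ℝ) + 1) * Real.sin (π * ((k : ℝ) + 1) / N) *
      ∫ t in Ioo 0 a, u t ^ (((k : ℝ) + 1) / N) / t) S := by
  obtain ⟨t₀, ht₀, hmax⟩ :=
    isCompact_Icc.exists_isMaxOn (nonempty_Icc.2 ha.le) hu.continuousOn
  have huM : ∀ t ∈ Ioo 0 a, u t ≤ u t₀ := fun t ht => hmax (Ioo_subset_Icc_self ht)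
  have hM0 : 0 ≤ u t₀ := (hu0 _ ⟨half_pos ha, half_lt_self ha⟩).le.trans
    (huM _ ⟨half_pos ha, half_lt_self ha⟩)
  have hN0 : (0 : ℝ) < N := by positivity
  have hw : Measurable fun t => u t ^ (1 / N : ℝ) := hu.measurable.pow_const _
  have hw0 : ∀ t ∈ Ioo 0 a, 0 < u t ^ (1 / N : ℝ) := fun t ht => rpow_pos_of_pos (hu0 t ht) _
  have hwq : ∀ t ∈ Ioo 0 a, u t ^ (1 / N : ℝ) ≤ u t₀ ^ (1 / N : ℝ) := fun t ht =>
    rpow_le_rpow (hu0 t ht).le (huM t ht) (by positivity)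
  have hq0 : 0 ≤ u t₀ ^ (1 / N : ℝ) := rpow_nonneg hM0 _
  have hq : u t₀ ^ (1 / N : ℝ) < 1 := rpow_lt_one hM0 (hu1 t₀ ht₀) (by positivity)
  have hint := integrableOn_rpow_div_of_le_mul hu.measurable ha (fun t ht => (hu0 t ht).le) huC
    (by positivity : (0 : ℝ) < 1 / N)
  have hθ : π / N < π := div_lt_self pi_pos (by exact_mod_cast hN)
  refine ⟨_, integral_neg_arg_div_pos hw hw0 hwq hq0 hq hint ha (by positivity) hθ, ?_⟩
  convert hasSum_integral_sin_mul_pow_div hw (fun t ht => (hw0 t ht).le) hwq hq0 hq hint (π / N)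
    using 3 with k
  · ring_nf
  · refine setIntegral_congr_fun measurableSet_Ioo fun t ht => ?_
    rw [← rpow_natCast, ← rpow_mul (hu0 t ht).le]
    push_cast
    ring_nf

end RpowSeries

theorem pos_of_mem_Ico_of_ne_zero {g : ℝ → ℝ} {a b : ℝ} (hg : ContinuousOn g (Ico a b))
    (ha : 0 < g a) (hne : ∀ t ∈ Ioo a b, g t ≠ 0) {t : ℝ} (ht : t ∈ Ico a b) :
    0 < g t := by
  by_contra! h
  obtain ⟨s, hs, hs0⟩ := isPreconnected_Ico.intermediate_value
    ht (left_mem_Ico.2 (ht.1.trans_lt ht.2)) hg ⟨h, ha.le⟩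
  rcases hs.1.eq_or_lt with rfl | hlt
  · exact ha.ne' hs0
  · exact hne s ⟨hlt, hs.2⟩ hs0

theorem pos_and_le_mul_of_eq_mul {u v : ℝ → ℝ} {a : ℝ} (hv : ContinuousOn v (Icc 0 a))
    (huv : ∀ t, u t = t * v t) (hv0 : 0 < v 0) (hu : ∀ t ∈ Ioo 0 a, u t ≠ 0) :
    (∀ t ∈ Ioo 0 a, 0 < u t) ∧ ∃ C, ∀ t ∈ Ioo 0 a, u t ≤ C * t := by
  have hvpos : ∀ t ∈ Ico 0 a, 0 < v t := fun t =>
    pos_of_mem_Ico_of_ne_zero (hv.mono Ico_subset_Icc_self) hv0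
      fun s hs hvs => hu s hs (by rw [huv, hvs, mul_zero])
  obtain ⟨C, hC⟩ := isCompact_Icc.exists_bound_of_continuousOn hv
  refine ⟨fun t ht => huv t ▸ mul_pos ht.1 (hvpos t (Ioo_subset_Ico_self ht)), C,
    fun t ht => ?_⟩
  rw [huv, mul_comm]
  exact mul_le_mul_of_nonneg_right (le_of_abs_le (hC t (Ioo_subset_Icc_self ht))) ht.1.le

theorem prod_ofReal_sub_ne_zero {n : ℕ} {lam : Fin n → ℂ} {j : Fin n} {r : ℝ}
    (hj : lam j = r)
    (hother : ∀ i : Fin n, i ≠ j → ∀ s : ℝ, lam i = s → ¬(0 < s ∧ s < 1)) (hr : r < 1)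
    {t : ℝ} (ht : t ∈ Ioo 0 r) : ∏ i, ((t : ℂ) - lam i) ≠ 0 := by
  refine Finset.prod_ne_zero_iff.2 fun i _ => sub_ne_zero.2 fun hi => ?_
  by_cases hij : i = j
  · rw [hij, hj, Complex.ofReal_inj] at hi
    exact ht.2.ne hi
  · exact hother i hij t hi.symm ⟨ht.1, ht.2.trans hr⟩

/-- Under the assumptions (\ref{thmassump}) of the paper, the series
`Σ_{k≥1} (1/k)·sin(πk/N)·∫₀^{λₙ} (−f(t))^{k/N} dt/t` converges absolutely and its sum
is strictly positive (the nonvanishing assertion of Theorem 4.2). -/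
theorem stmt5 (N n : ℕ) (hN : 2 ≤ N) (hn : 1 ≤ n)
    (lam : Fin n → ℂ)
    (f : ℝ → ℝ) (hf : ∀ t : ℝ, (f t : ℂ) = (t : ℂ) * ∏ i, ((t : ℂ) - lam i))
    (ln : ℝ) (hlam : lam ⟨n - 1, by omega⟩ = (ln : ℂ)) (hln0 : 0 < ln) (hln1 : ln < 1)
    (hother : ∀ i : Fin n, i ≠ ⟨n - 1, by omega⟩ →
      ∀ r : ℝ, lam i = (r : ℂ) → ¬(0 < r ∧ r < 1))
    (hbound : ∀ t : ℝ, 0 ≤ t → t < 1 → |f t| < 1)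
    (c : ℝ) (hc0 : 0 < c) (hc : (c : ℂ) = (-1 : ℂ) ^ (n - 1) * ∏ i, lam i) :
    Summable (fun k : ℕ =>
      |(1 / ((k : ℝ) + 1)) * Real.sin (Real.pi * ((k : ℝ) + 1) / (N : ℝ)) *
        ∫ t in Set.Ioo 0 ln, (-f t) ^ (((k : ℝ) + 1) / (N : ℝ)) / t|) ∧
    0 < ∑' k : ℕ,
      (1 / ((k : ℝ) + 1)) * Real.sin (Real.pi * ((k : ℝ) + 1) / (N : ℝ)) *
        ∫ t in Set.Ioo 0 ln, (-f t) ^ (((k : ℝ) + 1) / (N : ℝ)) / t := by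
  set g : ℝ → ℝ := fun t => (∏ i, ((t : ℂ) - lam i)).re
  have hfg : ∀ t, f t = t * g t := fun t => by
    rw [← Complex.re_ofReal_mul, ← hf, Complex.ofReal_re]
  have hg : Continuous g := by fun_prop
  have hg0 : g 0 = -c := by
    obtain ⟨m, rfl⟩ : ∃ m, n = m + 1 := ⟨n - 1, by omega⟩
    have hP0 : ∏ i, (((0 : ℝ) : ℂ) - lam i) = -(c : ℂ) := by
      simp [hc, Finset.prod_neg, pow_succ]
    simp only [g, hP0, Complex.neg_re, Complex.ofReal_re]
  have hf_ne : ∀ t ∈ Ioo 0 ln, -f t ≠ 0 := fun t ht => by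
    rw [neg_ne_zero, ← Complex.ofReal_ne_zero, hf]
    exact mul_ne_zero (Complex.ofReal_ne_zero.2 ht.1.ne')
      (prod_ofReal_sub_ne_zero hlam hother hln1 ht)
  have hfc : Continuous f := (continuous_id.mul hg).congr fun t => (hfg t).symm
  obtain ⟨hpos, C, hC⟩ := pos_and_le_mul_of_eq_mul (u := fun t => -f t) (v := fun t => -g t)
    hg.neg.continuousOn (fun t => by rw [hfg, mul_neg]) (by rwa [hg0, neg_neg]) hf_ne
  obtain ⟨S, hS, hsum⟩ := exists_pos_hasSum_sin_mul_integral_rpow hN hfc.neg hln0 hpos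
    (fun t ht => (neg_le_abs _).trans_lt (hbound t ht.1 (ht.2.trans_lt hln1))) hC
  exact ⟨hsum.summable.abs, hsum.tsum_eq ▸ hS⟩
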